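/- Assume H(A), H(B), H(J), H(f), H(u₀) and (H_s), and fix z ∈ V and g ∈ V*. Then the functional L(w) = ½⟨Aw,w⟩ + ⟨Bz − g, w⟩ + J(γz, γw) is coercive; more precisely, there exists c > 0 (depending on the data and on z, g) such that L(w) ≥ (½ m_A − m_{J1} c_γ²) ‖w‖_V² − c‖w‖_V − c for all w ∈ V, and since (H_s) gives ½ m_A − m_{J1} c_γ² > 0, L(w) → +∞ as ‖w‖_V → ∞. -/

import Mathlib

/-!
Relaxed monotonicity of `∂₂J(γz, ·)`, tested on the pair `(s • v, 0)` and divided by `s > 0`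
(the Clarke derivative is positively homogeneous in the direction), bounds
`J₂⁰(γz, s • v; -v)` by `m_{J1}‖v‖² + K‖v‖` on the whole segment from `v` to `0`, where `K` is a
local Lipschitz constant of `J(γz, ·)` at `0`. A one-sided mean value inequality for Clarke
derivatives, proved by continuous induction along the segment, turns this into
`J(γz, v) ≥ J(γz, 0) - m_{J1}‖v‖² - K‖v‖`. With `v = γw`, coercivity of `A` and the bounds
`‖γw‖ ≤ c_γ‖w‖`, `|⟨Bz - g, w⟩| ≤ ‖Bz - g‖‖w‖` give the quadratic lower bound on `L`, whose
leading coefficient is positive by `(H_s)`.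
-/

open Filter MeasureTheory Set
open Topology

noncomputable def clarkeDeriv {Y : Type*} [NormedAddCommGroup Y] [NormedSpace ℝ Y]
    (φ : Y → ℝ) (y z : Y) : ℝ :=
  Filter.limsup (fun p : Y × ℝ => (φ (p.1 + p.2 • z) - φ p.1) / p.2)
    ((nhds y) ×ˢ (nhdsWithin 0 (Set.Ioi 0)))

def clarkeSubdiff {Y : Type*} [NormedAddCommGroup Y] [NormedSpace ℝ Y]
    (φ : Y → ℝ) (y : Y) : Set (Y →L[ℝ] ℝ) :=
  {ξ | ∀ z, ξ z ≤ clarkeDeriv φ y z}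

/-- The functional `L(w) = ½⟨Aw,w⟩ + ⟨Bz − g, w⟩ + J(γz, γw)`. -/
noncomputable def Lfun {V X : Type*} [NormedAddCommGroup V] [NormedSpace ℝ V]
    [NormedAddCommGroup X] [NormedSpace ℝ X]
    (γ : V →L[ℝ] X) (A : V →L[ℝ] V →L[ℝ] ℝ) (B : V → V →L[ℝ] ℝ)
    (J : X → X → ℝ) (z : V) (g : V →L[ℝ] ℝ) (w : V) : ℝ :=
  (1 / 2) * A w w + (B z - g) w + J (γ z) (γ w)

section ClarkeDerivative

variable {X : Type*} [NormedAddCommGroup X] [NormedSpace ℝ X] {φ : X → ℝ}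

noncomputable def clarkeQuotient (φ : X → ℝ) (z : X) (p : X × ℝ) : ℝ :=
  (φ (p.1 + p.2 • z) - φ p.1) / p.2

theorem clarkeDeriv_eq_limsup (φ : X → ℝ) (y z : X) :
    clarkeDeriv φ y z = limsup (clarkeQuotient φ z) (𝓝 y ×ˢ 𝓝[>] 0) := rfl

theorem LocallyLipschitz.exists_eventually_abs_clarkeQuotient_le (hφ : LocallyLipschitz φ)
    (y : X) : ∃ K : ℝ, 0 ≤ K ∧
      ∀ z, ∀ᶠ p in 𝓝 y ×ˢ 𝓝[>] 0, |clarkeQuotient φ z p| ≤ K * ‖z‖ := by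
  obtain ⟨K, U, hU, hK⟩ := hφ y
  refine ⟨K, K.coe_nonneg, fun z => ?_⟩
  have hshift : Tendsto (fun p : X × ℝ => p.1 + p.2 • z) (𝓝 y ×ˢ 𝓝[>] 0) (𝓝 y) := by
    have hcont : Tendsto (fun p : X × ℝ => p.1 + p.2 • z) (𝓝 (y, 0)) (𝓝 (y + (0 : ℝ) • z)) :=
      (continuous_fst.add (continuous_snd.smul continuous_const)).tendsto _
    rw [zero_smul, add_zero] at hcont
    exact hcont.mono_left (by rw [nhds_prod_eq]; exact prod_mono le_rfl nhdsWithin_le_nhds)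
  filter_upwards [tendsto_fst.eventually (hU : ∀ᶠ x in 𝓝 y, x ∈ U), hshift.eventually hU,
    tendsto_snd.eventually self_mem_nhdsWithin] with p hp₁ hp₂ (hpos : 0 < p.2)
  have hlip := hK.dist_le_mul _ hp₂ _ hp₁
  rw [Real.dist_eq, dist_eq_norm, add_sub_cancel_left, norm_smul, Real.norm_of_nonneg hpos.le]
    at hlip
  rw [clarkeQuotient, abs_div, abs_of_pos hpos, div_le_iff₀ hpos]
  linarith

theorem LocallyLipschitz.isBoundedUnder_le_clarkeQuotient (hφ : LocallyLipschitz φ) (y z : X) :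
    IsBoundedUnder (· ≤ ·) (𝓝 y ×ˢ 𝓝[>] 0) (clarkeQuotient φ z) := by
  obtain ⟨K, -, hK⟩ := hφ.exists_eventually_abs_clarkeQuotient_le y
  exact isBoundedUnder_of_eventually_le ((hK z).mono fun _ hp => (abs_le.mp hp).2)

theorem LocallyLipschitz.isBoundedUnder_ge_clarkeQuotient (hφ : LocallyLipschitz φ) (y z : X) :
    IsBoundedUnder (· ≥ ·) (𝓝 y ×ˢ 𝓝[>] 0) (clarkeQuotient φ z) := by
  obtain ⟨K, -, hK⟩ := hφ.exists_eventually_abs_clarkeQuotient_le y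
  exact isBoundedUnder_of_eventually_ge ((hK z).mono fun _ hp => (abs_le.mp hp).1)

theorem LocallyLipschitz.exists_abs_clarkeDeriv_le (hφ : LocallyLipschitz φ) (y : X) :
    ∃ K : ℝ, 0 ≤ K ∧ ∀ z, |clarkeDeriv φ y z| ≤ K * ‖z‖ := by
  obtain ⟨K, hK₀, hK⟩ := hφ.exists_eventually_abs_clarkeQuotient_le y
  refine ⟨K, hK₀, fun z => abs_le.mpr ⟨?_, ?_⟩⟩
  · exact le_limsup_of_frequently_le ((hK z).mono fun _ hp => (abs_le.mp hp).1).frequently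
      (hφ.isBoundedUnder_le_clarkeQuotient y z)
  · exact limsup_le_of_le (hφ.isBoundedUnder_ge_clarkeQuotient y z).isCoboundedUnder_le
      ((hK z).mono fun _ hp => (abs_le.mp hp).2)

theorem map_const_mul_nhdsGT_zero {t : ℝ} (ht : 0 < t) : map (t * ·) (𝓝[>] 0) = 𝓝[>] 0 := by
  conv_lhs => rw [← comap_mulLeft_nhdsGT_zero ht]
  exact map_comap_of_surjective (mul_left_surjective₀ ht.ne') _

theorem LocallyLipschitz.clarkeDeriv_smul (hφ : LocallyLipschitz φ) (y z : X) {t : ℝ}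
    (ht : 0 < t) : clarkeDeriv φ y (t • z) = t * clarkeDeriv φ y z := by
  have hmap : map (Prod.map id (t * ·)) (𝓝 y ×ˢ 𝓝[>] 0) = 𝓝 y ×ˢ 𝓝[>] (0 : ℝ) := by
    rw [← prod_map_map_eq', map_id, map_const_mul_nhdsGT_zero ht]
  have hquot : clarkeQuotient φ (t • z) =
      (t * ·) ∘ clarkeQuotient φ z ∘ Prod.map id (t * ·) := by
    funext p
    simp only [clarkeQuotient, Function.comp, Prod.map, id, smul_smul, mul_comm p.2 t]
    rw [mul_div_assoc', mul_div_mul_left _ _ ht.ne']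
  rw [clarkeDeriv_eq_limsup, clarkeDeriv_eq_limsup, hquot, ← Function.comp_assoc,
    limsup_comp, hmap]
  exact ((monotone_mul_left_of_nonneg ht.le).map_limsup_of_continuousAt _
    (continuous_const_mul t).continuousAt (hφ.isBoundedUnder_le_clarkeQuotient y z)
    (hφ.isBoundedUnder_ge_clarkeQuotient y z).isCoboundedUnder_le).symm

theorem LocallyLipschitz.exists_clarkeQuotient_lt (hφ : LocallyLipschitz φ) (y z : X) {b δ : ℝ}
    (hδ : 0 < δ) (hb : clarkeDeriv φ y z < b) :
    ∃ l ∈ Set.Ioo 0 δ, (φ (y + l • z) - φ y) / l < b := by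
  have hev := (eventually_lt_of_limsup_lt hb (hφ.isBoundedUnder_le_clarkeQuotient y z)).curry
  exact (hev.self_of_nhds.and (Ioo_mem_nhdsGT hδ)).exists.imp fun l hl => ⟨hl.2, hl.1⟩

theorem LocallyLipschitz.sub_le_of_clarkeDeriv_le (hφ : LocallyLipschitz φ) (y z : X) {M : ℝ}
    (hM : ∀ t ∈ Set.Ico (0 : ℝ) 1, clarkeDeriv φ (y + t • z) z ≤ M) :
    φ (y + z) - φ y ≤ M := by
  refine le_of_forall_pos_le_add fun ε hε => ?_
  set S := {s : ℝ | φ (y + s • z) - φ y ≤ (M + ε) * s}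
  have hS : IsClosed S := isClosed_le
    ((hφ.continuous.comp (continuous_const.add (continuous_id.smul continuous_const))).sub
      continuous_const) (continuous_const.mul continuous_id)
  have hstep : ∀ s ∈ S ∩ Set.Ico 0 1, ∀ s' ∈ Set.Ioi s, (S ∩ Set.Ioc s s').Nonempty := by
    rintro s ⟨hsS, hs⟩ s' hs'
    obtain ⟨l, ⟨hl₀, hl⟩, hq⟩ := hφ.exists_clarkeQuotient_lt (y + s • z) z (sub_pos.mpr hs')
      ((hM s hs).trans_lt (lt_add_of_pos_right M hε))
    rw [div_lt_iff₀ hl₀, add_assoc, ← add_smul] at hq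
    refine ⟨s + l, ?_, by linarith, by linarith⟩
    change φ (y + (s + l) • z) - φ y ≤ (M + ε) * (s + l)
    have : φ (y + s • z) - φ y ≤ (M + ε) * s := hsS
    linarith
  have h1 : (1 : ℝ) ∈ S := (hS.inter isClosed_Icc).Icc_subset_of_forall_exists_gt
    (by simp [S]) hstep ⟨zero_le_one, le_rfl⟩
  simpa [S] using h1

theorem LocallyLipschitz.exists_quadratic_lower_bound (hφ : LocallyLipschitz φ) {m : ℝ}
    (hm : 0 ≤ m)
    (hmono : ∀ v₁ v₂ : X,
      clarkeDeriv φ v₁ (v₂ - v₁) + clarkeDeriv φ v₂ (v₁ - v₂) ≤ m * ‖v₁ - v₂‖ ^ 2) :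
    ∃ K : ℝ, 0 ≤ K ∧ ∀ v, φ 0 - m * ‖v‖ ^ 2 - K * ‖v‖ ≤ φ v := by
  obtain ⟨K, hK₀, hK⟩ := hφ.exists_abs_clarkeDeriv_le 0
  refine ⟨K, hK₀, fun v => ?_⟩
  suffices φ (v + -v) - φ v ≤ m * ‖v‖ ^ 2 + K * ‖v‖ by
    rw [add_neg_cancel] at this; linarith
  refine hφ.sub_le_of_clarkeDeriv_le v (-v) fun t ⟨_, ht₁⟩ => ?_
  have hs : 0 < 1 - t := sub_pos.mpr ht₁
  have hpt : v + t • -v = (1 - t) • v := by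
    rw [sub_smul, one_smul, smul_neg, sub_eq_add_neg]
  -- Relaxed monotonicity on the pair `((1 - t) • v, 0)`, rescaled by `1 - t`.
  have hpair := hmono ((1 - t) • v) 0
  rw [zero_sub, sub_zero, ← smul_neg, hφ.clarkeDeriv_smul _ _ hs, hφ.clarkeDeriv_smul _ _ hs,
    norm_smul, Real.norm_of_nonneg hs.le] at hpair
  have h0 : -(K * ‖v‖) ≤ clarkeDeriv φ 0 v := (abs_le.mp (hK v)).1
  have hpoint : clarkeDeriv φ ((1 - t) • v) (-v) + clarkeDeriv φ 0 v ≤ (1 - t) * m * ‖v‖ ^ 2 := by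
    refine le_of_mul_le_mul_left ?_ hs
    linarith
  have hmt : (1 - t) * m * ‖v‖ ^ 2 ≤ m * ‖v‖ ^ 2 := by
    nlinarith [mul_nonneg hm (sq_nonneg ‖v‖)]
  rw [hpt]
  linarith

end ClarkeDerivative

theorem tendsto_atTop_of_quadratic_lower_bound {E : Type*} [SeminormedAddCommGroup E]
    {f : E → ℝ} {a c : ℝ} (ha : 0 < a) (hf : ∀ w, a * ‖w‖ ^ 2 - c * ‖w‖ - c ≤ f w) :
    Tendsto f (comap norm atTop) atTop := by
  have hquad : Tendsto (fun s : ℝ => s * (a * s + -c) + -c) atTop atTop :=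
    tendsto_atTop_add_const_right _ _ <| tendsto_id.atTop_mul_atTop₀ <|
      tendsto_atTop_add_const_right _ _ (tendsto_id.const_mul_atTop ha)
  refine tendsto_atTop_mono (fun w => ?_) (hquad.comp tendsto_comap)
  simp only [Function.comp]
  linarith [hf w]

theorem Lfun_lower_bound {V X : Type*} [NormedAddCommGroup V] [NormedSpace ℝ V]
    [NormedAddCommGroup X] [NormedSpace ℝ X]
    (γ : V →L[ℝ] X) (A : V →L[ℝ] V →L[ℝ] ℝ) (B : V → V →L[ℝ] ℝ) (J : X → X → ℝ) (z : V)
    (g : V →L[ℝ] ℝ) {mA mJ1 K : ℝ} (hAco : ∀ u : V, mA * ‖u‖ ^ 2 ≤ A u u) (hmJ1 : 0 ≤ mJ1)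
    (hK₀ : 0 ≤ K) (hJ : ∀ v, J (γ z) 0 - mJ1 * ‖v‖ ^ 2 - K * ‖v‖ ≤ J (γ z) v) (w : V) :
    ((1 / 2) * mA - mJ1 * ‖γ‖ ^ 2) * ‖w‖ ^ 2
        - (‖B z - g‖ + K * ‖γ‖ + |J (γ z) 0| + 1) * ‖w‖
        - (‖B z - g‖ + K * ‖γ‖ + |J (γ z) 0| + 1) ≤ Lfun γ A B J z g w := by
  have hlin : -(‖B z - g‖ * ‖w‖) ≤ (B z - g) w :=
    neg_le_of_abs_le ((B z - g).le_opNorm w)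
  have hγ : ‖γ w‖ ≤ ‖γ‖ * ‖w‖ := γ.le_opNorm w
  have hγsq : mJ1 * ‖γ w‖ ^ 2 ≤ mJ1 * ‖γ‖ ^ 2 * ‖w‖ ^ 2 := by
    rw [mul_assoc, ← mul_pow]
    exact mul_le_mul_of_nonneg_left (pow_le_pow_left₀ (norm_nonneg _) hγ 2) hmJ1
  have hJw := hJ (γ w)
  have hK : K * ‖γ w‖ ≤ K * (‖γ‖ * ‖w‖) := mul_le_mul_of_nonneg_left hγ hK₀
  have hJ0 : -|J (γ z) 0| ≤ J (γ z) 0 := neg_abs_le _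
  have hw : 0 ≤ (|J (γ z) 0| + 1) * ‖w‖ := by positivity
  have hc : 0 ≤ ‖B z - g‖ + K * ‖γ‖ := by positivity
  rw [Lfun]
  linarith [hAco w]

theorem Lfun_coercive_general
    {V X : Type*}
    [NormedAddCommGroup V] [NormedSpace ℝ V]
    [NormedAddCommGroup X] [NormedSpace ℝ X]
    (γ : V →L[ℝ] X)
    -- H(A)
    (A : V →L[ℝ] V →L[ℝ] ℝ)
    (mA : ℝ)
    (hAco : ∀ u : V, mA * ‖u‖ ^ 2 ≤ A u u)
    -- H(B)
    (B : V → V →L[ℝ] ℝ)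
    -- H(J)
    (J : X → X → ℝ)
    (hJa : ∀ w : X, LocallyLipschitz (J w))
    (mJ1 mJ2 : ℝ) (hmJ1 : 0 ≤ mJ1)
    (hJc : ∀ w₁ w₂ v₁ v₂ : X,
      clarkeDeriv (J w₁) v₁ (v₂ - v₁) + clarkeDeriv (J w₂) v₂ (v₁ - v₂) ≤
        mJ1 * ‖v₁ - v₂‖ ^ 2 + mJ2 * ‖w₁ - w₂‖ * ‖v₁ - v₂‖)
    -- (H_s)
    (hs : 0 < mA - 2 * mJ1 * ‖γ‖ ^ 2)
    (z : V) (g : V →L[ℝ] ℝ) :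
    0 < (1 / 2) * mA - mJ1 * ‖γ‖ ^ 2 ∧
    ∃ c : ℝ, 0 < c ∧
      (∀ w : V, ((1 / 2) * mA - mJ1 * ‖γ‖ ^ 2) * ‖w‖ ^ 2 - c * ‖w‖ - c ≤
        Lfun γ A B J z g w) ∧
      Filter.Tendsto (Lfun γ A B J z g)
        (Filter.comap (fun w : V => ‖w‖) Filter.atTop) Filter.atTop := by
  have ha : 0 < (1 / 2) * mA - mJ1 * ‖γ‖ ^ 2 := by linarith
  obtain ⟨K, hK₀, hJ⟩ := (hJa (γ z)).exists_quadratic_lower_bound hmJ1 fun v₁ v₂ => by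
    simpa using hJc (γ z) (γ z) v₁ v₂
  have hbound := Lfun_lower_bound γ A B J z g hAco hmJ1 hK₀ hJ
  exact ⟨ha, _, by positivity, hbound, tendsto_atTop_of_quadratic_lower_bound ha hbound⟩

/-- `L` is coercive: `L(w) ≥ (½m_A − m_{J1}c_γ²)‖w‖² − c‖w‖ − c`,
where `(H_s)` gives `½m_A − m_{J1}c_γ² > 0`, so `L(w) → +∞` as `‖w‖ → ∞`. -/
theorem Lfun_coercive
    {V X : Type*}
    [NormedAddCommGroup V] [NormedSpace ℝ V] [CompleteSpace V]
    [NormedAddCommGroup X] [NormedSpace ℝ X] [CompleteSpace X]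
    -- V reflexive
    (hrefl : Function.Surjective (NormedSpace.inclusionInDoubleDual ℝ V))
    (γ : V →L[ℝ] X)
    -- H(A)
    (A : V →L[ℝ] V →L[ℝ] ℝ)
    (hAsym : ∀ u v : V, A u v = A v u)
    (mA : ℝ) (hmA : 0 < mA)
    (hAco : ∀ u : V, mA * ‖u‖ ^ 2 ≤ A u u)
    -- H(B)
    (B : V → V →L[ℝ] ℝ)
    (LB : ℝ) (hLB : 0 < LB)
    (hB : ∀ v w : V, ‖B v - B w‖ ≤ LB * ‖v - w‖)
    -- H(J)
    (J : X → X → ℝ)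
    (hJa : ∀ w : X, LocallyLipschitz (J w))
    (c₀ c₁ c₂ : ℝ) (hc₀ : 0 ≤ c₀) (hc₁ : 0 ≤ c₁) (hc₂ : 0 ≤ c₂)
    (hJb : ∀ w v : X, ∀ ξ ∈ clarkeSubdiff (J w) v, ‖ξ‖ ≤ c₀ + c₁ * ‖w‖ + c₂ * ‖v‖)
    (mJ1 mJ2 : ℝ) (hmJ1 : 0 ≤ mJ1) (hmJ2 : 0 ≤ mJ2)
    (hJc : ∀ w₁ w₂ v₁ v₂ : X,
      clarkeDeriv (J w₁) v₁ (v₂ - v₁) + clarkeDeriv (J w₂) v₂ (v₁ - v₂) ≤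
        mJ1 * ‖v₁ - v₂‖ ^ 2 + mJ2 * ‖w₁ - w₂‖ * ‖v₁ - v₂‖)
    -- H(f)
    (T : ℝ) (hT : 0 < T)
    (f : ℝ → V →L[ℝ] ℝ) (hf : ContinuousOn f (Set.Icc 0 T))
    -- H(u₀)
    (u₀ : V)
    -- (H_s)
    (hs : 0 < mA - 2 * mJ1 * ‖γ‖ ^ 2)
    (z : V) (g : V →L[ℝ] ℝ) :
    0 < (1 / 2) * mA - mJ1 * ‖γ‖ ^ 2 ∧
    ∃ c : ℝ, 0 < c ∧
      (∀ w : V, ((1 / 2) * mA - mJ1 * ‖γ‖ ^ 2) * ‖w‖ ^ 2 - c * ‖w‖ - c ≤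
        Lfun γ A B J z g w) ∧
      Filter.Tendsto (Lfun γ A B J z g)
        (Filter.comap (fun w : V => ‖w‖) Filter.atTop) Filter.atTop :=
  Lfun_coercive_general γ A mA hAco B J hJa mJ1 mJ2 hmJ1 hJc hs z g
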